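/- Let n = 2m+1 and θ_s = e_s − e_{n−s+1} ∈ ℝ^n for s = 1, ..., m. Let V_f = {v ∈ V_0 : (v, θ_s) = 0 for all s}, where V_0 = {v ∈ ℝ^n : Σ v_i = 0} is the root space of sl(n). Then dim V_f = m, and V_f contains no root e_i − e_j (i ≠ j) of sl(n). -/

import Mathlib

noncomputable def ev (n i : ℕ) : EuclideanSpace ℝ (Fin n) :=
  WithLp.toLp 2 (fun a : Fin n => if (a : ℕ) + 1 = i then 1 else 0)

def slRoots (n : ℕ) : Set (EuclideanSpace ℝ (Fin n)) :=
  {v | ∃ i j, 1 ≤ i ∧ i ≤ n ∧ 1 ≤ j ∧ j ≤ n ∧ i ≠ j ∧ v = ev n i - ev n j}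

/-- The coordinate-sum linear functional on `ℝ^n`. -/
noncomputable def sumF (n : ℕ) : EuclideanSpace ℝ (Fin n) →ₗ[ℝ] ℝ where
  toFun v := ∑ i, v i
  map_add' x y := by
    simp [Finset.sum_add_distrib]
  map_smul' c x := by
    simp [Finset.mul_sum]

open scoped RealInnerProductSpace

lemma ev_eq_single {n : ℕ} (i : ℕ) (hi1 : 1 ≤ i) (hin : i ≤ n) :
    ev n i = EuclideanSpace.single (⟨i - 1, by omega⟩ : Fin n) (1 : ℝ) := by
  ext a
  simp only [ev, EuclideanSpace.single_apply, Fin.ext_iff]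
  by_cases h : (a : ℕ) + 1 = i
  · rw [if_pos h, if_pos (by omega)]
  · rw [if_neg h, if_neg (by omega)]

lemma inner_ev_sub {n i j : ℕ} (hi1 : 1 ≤ i) (hin : i ≤ n) (hj1 : 1 ≤ j) (hjn : j ≤ n)
    (v : EuclideanSpace ℝ (Fin n)) :
    ⟪ev n i - ev n j, v⟫ = v ⟨i - 1, by omega⟩ - v ⟨j - 1, by omega⟩ := by
  rw [ev_eq_single i hi1 hin, ev_eq_single j hj1 hjn, inner_sub_left,
    EuclideanSpace.inner_single_left, EuclideanSpace.inner_single_left]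
  simp

lemma sum_ev {n : ℕ} (i : ℕ) (hi1 : 1 ≤ i) (hin : i ≤ n) :
    ∑ a : Fin n, ev n i a = 1 := by
  rw [ev_eq_single i hi1 hin]
  simp [EuclideanSpace.single_apply]

lemma ev_apply {n : ℕ} (i : ℕ) (a : Fin n) :
    ev n i a = if (a : ℕ) + 1 = i then 1 else 0 := rfl

/-- For `n = 2m+1` and `θ_s = e_s − e_{n−s+1}` (`s = 1, …, m`), the subspace
`V_f = {v ∈ V₀ : (v, θ_s) = 0 ∀s}` of the root space `V₀ = {Σ vᵢ = 0}` has
dimension `m` and contains no root of `sl(n)`. -/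
theorem stmt16 (m : ℕ) (hm : 1 ≤ m) :
    let n := 2 * m + 1
    let θ : ℕ → EuclideanSpace ℝ (Fin n) := fun s => ev n s - ev n (n - s + 1)
    let Vf : Submodule ℝ (EuclideanSpace ℝ (Fin n)) :=
      LinearMap.ker (sumF n) ⊓ ⨅ s ∈ Finset.Icc 1 m, LinearMap.ker (innerSL ℝ (θ s)).toLinearMap
    Module.finrank ℝ ↥Vf = m ∧ ∀ v ∈ slRoots n, v ∉ Vf := by
  intro n θ Vf
  have hn : n = 2 * m + 1 := rfl
  have hmem : ∀ v, v ∈ Vf ↔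
      (∑ i, v i) = 0 ∧ ∀ s ∈ Finset.Icc 1 m, ⟪θ s, v⟫ = 0 := by
    intro v
    simp [Vf, Submodule.mem_inf, Submodule.mem_iInf, LinearMap.mem_ker, sumF]
  -- inner product with θ s in coordinates
  have hθ : ∀ s : ℕ, ∀ (hs1 : 1 ≤ s) (hs2 : s ≤ m) (v : EuclideanSpace ℝ (Fin n)),
      ⟪θ s, v⟫ = v ⟨s - 1, by omega⟩ - v ⟨n - s, by omega⟩ := by
    intro s hs1 hs2 v
    have h := inner_ev_sub (n := n) (i := s) (j := n - s + 1) hs1 (by omega) (by omega)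
      (by omega) v
    show ⟪ev n s - ev n (n - s + 1), v⟫ = _
    rw [h]
    congr 1
  constructor
  · -- dimension computation
    classical
    set f : Fin (m + 1) → (EuclideanSpace ℝ (Fin n) →ₗ[ℝ] ℝ) := fun k =>
      if (k : ℕ) < m then (innerSL ℝ (θ ((k : ℕ) + 1)) : EuclideanSpace ℝ (Fin n) →ₗ[ℝ] ℝ)
      else sumF n with hf
    set L : EuclideanSpace ℝ (Fin n) →ₗ[ℝ] (Fin (m + 1) → ℝ) := LinearMap.pi f with hL
    have happ : ∀ (v : EuclideanSpace ℝ (Fin n)) (k : Fin (m + 1)),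
        L v k = if (k : ℕ) < m then ⟪θ ((k : ℕ) + 1), v⟫ else ∑ i, v i := by
      intro v k
      show f k v = _
      simp only [hf]
      split_ifs with hk
      · rfl
      · rfl
    have hker : Vf = LinearMap.ker L := by
      ext v
      rw [hmem, LinearMap.mem_ker]
      constructor
      · rintro ⟨h0, hs⟩
        funext k
        rw [happ, Pi.zero_apply]
        split_ifs with hk
        · exact hs ((k : ℕ) + 1) (by rw [Finset.mem_Icc]; omega)
        · exact h0
      · intro h
        have hk : ∀ k : Fin (m + 1), L v k = 0 := fun k => congrFun h k
        constructor
        · have h1 := hk ⟨m, by omega⟩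
          rw [happ] at h1
          simpa using h1
        · intro s hs
          rw [Finset.mem_Icc] at hs
          have h1 := hk ⟨s - 1, by omega⟩
          rw [happ] at h1
          rw [if_pos (show ((⟨s - 1, by omega⟩ : Fin (m + 1)) : ℕ) < m from by
            simp only [Fin.val_mk]; omega)] at h1
          have hss : ((⟨s - 1, by omega⟩ : Fin (m + 1)) : ℕ) + 1 = s := by
            simp only [Fin.val_mk]; omega
          rw [hss] at h1
          exact h1
    have hsurj : Function.Surjective L := by
      intro w
      set u : Fin (m + 1) → EuclideanSpace ℝ (Fin n) := fun k =>
        if (k : ℕ) < m then ev n ((k : ℕ) + 1) - ev n (m + 1) else ev n (m + 1) with hu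
      have hLu : ∀ k, L (u k) = Pi.single k 1 := by
        intro k
        funext j
        rw [happ, Pi.single_apply]
        simp only [hu, Fin.ext_iff]
        by_cases hj : (j : ℕ) < m
        · rw [if_pos hj, hθ ((j : ℕ) + 1) (by omega) (by omega)]
          by_cases hk : (k : ℕ) < m
          · rw [if_pos hk]
            simp only [PiLp.sub_apply, ev_apply, Fin.val_mk]
            have hjlt := j.isLt; have hklt := k.isLt
            split_ifs <;> first | (exfalso; omega) | norm_num
          · rw [if_neg hk]
            simp only [ev_apply, Fin.val_mk]
            have hjlt := j.isLt; have hklt := k.isLt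
            split_ifs <;> first | (exfalso; omega) | norm_num
        · rw [if_neg hj]
          have hjm : (j : ℕ) = m := by have := j.isLt; omega
          by_cases hk : (k : ℕ) < m
          · rw [if_pos hk, if_neg (by omega)]
            simp only [PiLp.sub_apply, Finset.sum_sub_distrib]
            rw [sum_ev ((k : ℕ) + 1) (by omega) (by omega),
              sum_ev (m + 1) (by omega) (by omega)]
            ring
          · have hkm : (k : ℕ) = m := by have := k.isLt; omega
            rw [if_neg hk, if_pos (by omega)]
            exact sum_ev (m + 1) (by omega) (by omega)
      refine ⟨∑ k : Fin (m + 1), w k • u k, ?_⟩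
      rw [map_sum]
      simp only [map_smul, hLu]
      funext j
      simp [Pi.single_apply]
    have h1 := LinearMap.finrank_range_add_finrank_ker L
    rw [LinearMap.range_eq_top.mpr hsurj, finrank_top] at h1
    rw [hker]
    have hd : Module.finrank ℝ (EuclideanSpace ℝ (Fin n)) = n := finrank_euclideanSpace_fin
    have ht : Module.finrank ℝ (Fin (m + 1) → ℝ) = m + 1 := Module.finrank_fin_fun ℝ
    rw [hd, ht] at h1
    omega
  · -- no roots in Vf
    rintro v ⟨i, j, hi1, hin, hj1, hjn, hij, rfl⟩ hv
    rw [hmem] at hv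
    obtain ⟨h0, hs⟩ := hv
    have key : ∀ s : ℕ, ∀ (hs1 : 1 ≤ s) (hs2 : s ≤ m),
        (ev n i - ev n j) ⟨s - 1, by omega⟩ = (ev n i - ev n j) ⟨n - s, by omega⟩ := by
      intro s hs1 hs2
      have := hs s (by rw [Finset.mem_Icc]; omega)
      rw [hθ s hs1 hs2] at this
      linarith
    rw [hn] at hin hjn
    by_cases hi : i ≤ m
    · have := key i hi1 hi
      simp only [PiLp.sub_apply, ev_apply, Fin.val_mk] at this
      split_ifs at this <;> first | (exfalso; omega) | norm_num at this
    · by_cases hi2 : i = m + 1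
      · have hjm : j ≠ m + 1 := by omega
        by_cases hjle : j ≤ m
        · have := key j hj1 hjle
          simp only [PiLp.sub_apply, ev_apply, Fin.val_mk] at this
          split_ifs at this <;> first | (exfalso; omega) | norm_num at this
        · have := key (n - j + 1) (by omega) (by omega)
          simp only [PiLp.sub_apply, ev_apply, Fin.val_mk] at this
          split_ifs at this <;> first | (exfalso; omega) | norm_num at this
      · have := key (n - i + 1) (by omega) (by omega)
        simp only [PiLp.sub_apply, ev_apply, Fin.val_mk] at this
        split_ifs at this <;> first | (exfalso; omega) | norm_num at this
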